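/- Let G be a group, M ⊆ G a subset closed under conjugation and inverses, and for m ∈ G define ⟨m⟩₀^G = G and ⟨m⟩_{k+1}^G = ⟨m⟩^{⟨m⟩_k^G} (iterated normal closure). Then the subgroup μ_k generated by {[m, m^g] : m ∈ M, g ∈ ⟨m⟩_k^G} equals the subgroup generated by {[m, g] : m ∈ M, g ∈ ⟨m⟩_{k+1}^G}, and is a normal subgroup of G. -/
import Mathlib

/-- The commutator `[a,b] = a⁻¹b⁻¹ab` (paper's convention). -/
def pc {G : Type*} [Group G] (a b : G) : G := a⁻¹ * b⁻¹ * a * b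

/-- Iterated normal closure: `Nc m 0 = G`, and `Nc m (k+1)` is the normal
closure of `⟨m⟩` in `Nc m k`, i.e. the subgroup generated by the conjugates
of `m` by elements of `Nc m k`. -/
def Nc {G : Type*} [Group G] (m : G) : ℕ → Subgroup G
  | 0 => ⊤
  | k + 1 => Subgroup.closure {x | ∃ h ∈ Nc m k, x = h⁻¹ * m * h}

lemma Nc_conj {G : Type*} [Group G] (m c : G) (k : ℕ) :
    Nc (c * m * c⁻¹) k = (Nc m k).map ((MulAut.conj c : G ≃* G) : G →* G) := by
  induction k with
  | zero =>
      show (⊤ : Subgroup G) = Subgroup.map _ ⊤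
      rw [Subgroup.map_top_of_surjective]
      intro x; exact ⟨c⁻¹ * x * c, by simp [MulAut.conj_apply]; group⟩
  | succ k ih =>
      show Subgroup.closure _ = Subgroup.map _ (Subgroup.closure _)
      rw [MonoidHom.map_closure]
      congr 1
      ext x
      simp only [Set.mem_setOf_eq, Set.mem_image, ih, Subgroup.mem_map,
        MulEquiv.coe_toMonoidHom, MulAut.conj_apply]
      constructor
      · rintro ⟨h, ⟨y, hy, rfl⟩, rfl⟩
        exact ⟨y⁻¹ * m * y, ⟨y, hy, rfl⟩, by simp [MulAut.conj_apply]; group⟩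
      · rintro ⟨a, ⟨y, hy, rfl⟩, rfl⟩
        exact ⟨c * y * c⁻¹, ⟨y, hy, rfl⟩, by simp [MulAut.conj_apply]; group⟩

/-- Formula (3.1): if `M` is closed under conjugation and inverses, then the
subgroup `μ_k` generated by `{[m, m^g] : m ∈ M, g ∈ ⟨m⟩_k^G}` equals the
subgroup generated by `{[m, g] : m ∈ M, g ∈ ⟨m⟩_{k+1}^G}`, and is normal. -/
theorem stmt_18 {G : Type*} [Group G] (M : Set G) (k : ℕ)
    (hconj : ∀ m ∈ M, ∀ h : G, h⁻¹ * m * h ∈ M)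
    (hinv : ∀ m ∈ M, m⁻¹ ∈ M) :
    Subgroup.closure {x | ∃ m ∈ M, ∃ g ∈ Nc m k, x = pc m (g⁻¹ * m * g)} =
      Subgroup.closure {x | ∃ m ∈ M, ∃ g ∈ Nc m (k + 1), x = pc m g} ∧
    (Subgroup.closure
      {x | ∃ m ∈ M, ∃ g ∈ Nc m k, x = pc m (g⁻¹ * m * g)}).Normal := by
  set S : Set G := {x | ∃ m ∈ M, ∃ g ∈ Nc m k, x = pc m (g⁻¹ * m * g)} with hS
  set μ := Subgroup.closure S with hμ
  -- the generating set S is closed under conjugation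
  have hSconj : ∀ s ∈ S, ∀ n : G, n * s * n⁻¹ ∈ S := by
    rintro s ⟨m, hm, g, hg, rfl⟩ n
    refine ⟨n * m * n⁻¹, by simpa using hconj m hm n⁻¹, n * g * n⁻¹, ?_, ?_⟩
    · rw [Nc_conj]
      exact ⟨g, hg, rfl⟩
    · simp only [pc]; group
  -- hence μ is normal
  have hnorm : μ.Normal := by
    constructor
    intro x hx n
    induction hx using Subgroup.closure_induction with
    | mem x hx => exact Subgroup.subset_closure (hSconj x hx n)
    | one => simpa using μ.one_mem
    | mul a b _ _ ha hb =>
        have : n * (a * b) * n⁻¹ = (n * a * n⁻¹) * (n * b * n⁻¹) := by group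
        rw [this]; exact μ.mul_mem ha hb
    | inv a _ ha =>
        have : n * a⁻¹ * n⁻¹ = (n * a * n⁻¹)⁻¹ := by group
        rw [this]; exact μ.inv_mem ha
  refine ⟨le_antisymm ?_ ?_, hnorm⟩
  · -- μ ≤ ν
    rw [Subgroup.closure_le]
    rintro x ⟨m, hm, g, hg, rfl⟩
    exact Subgroup.subset_closure
      ⟨m, hm, g⁻¹ * m * g, Subgroup.subset_closure ⟨g, hg, rfl⟩, rfl⟩
  · -- ν ≤ μ
    rw [Subgroup.closure_le]
    rintro x ⟨m, hm, g, hg, rfl⟩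
    -- the set of g with pc m g ∈ μ is a subgroup
    let K : Subgroup G :=
      { carrier := {g | pc m g ∈ μ}
        one_mem' := by simp [pc, μ.one_mem]
        mul_mem' := by
          intro a b ha hb
          have key : pc m (a * b) = pc m b * (b⁻¹ * pc m a * b) := by
            simp only [pc]; group
          show pc m (a * b) ∈ μ
          rw [key]
          exact μ.mul_mem hb (hnorm.conj_mem' _ ha b)
        inv_mem' := by
          intro a ha
          have key : pc m a⁻¹ = a * (pc m a)⁻¹ * a⁻¹ := by
            simp only [pc]; group
          show pc m a⁻¹ ∈ μ
          rw [key]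
          exact hnorm.conj_mem _ (μ.inv_mem ha) a }
    have hle : Nc m (k + 1) ≤ K := by
      show Subgroup.closure _ ≤ K
      rw [Subgroup.closure_le]
      rintro y ⟨h, hh, rfl⟩
      exact Subgroup.subset_closure ⟨m, hm, h, hh, rfl⟩
    exact hle hg
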